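/- For any two finite probability distributions obtained by measuring density matrices ρ and σ with a POVM {Pₓ}, the Kolmogorov distance between the outcome distributions is at most 1 − (1/2) B(ρ,σ)², where B is the fidelity. Consequently, max over POVMs of K(ρ(P), σ(P)) ≤ 1 − (1/2) B(ρ,σ)². -/

import Mathlib

open Matrix Real Complex ComplexOrder Filter

noncomputable def traceNorm {n : Type*} [Fintype n] [DecidableEq n] (A : Matrix n n ℂ) : ℝ :=
  ∑ i, Real.sqrt ((Matrix.posSemidef_conjTranspose_mul_self A).isHermitian.eigenvalues i)

def IsDensity {n : Type*} [Fintype n] [DecidableEq n] (ρ : Matrix n n ℂ) : Prop :=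
  ρ.PosSemidef ∧ ρ.trace = 1

noncomputable def matSqrt {n : Type*} [Fintype n] [DecidableEq n] (A : Matrix n n ℂ) : Matrix n n ℂ :=
  open scoped Classical in
  if h : A.PosSemidef then
    (h.1.eigenvectorUnitary : Matrix n n ℂ) * diagonal ((↑) ∘ (√·) ∘ h.1.eigenvalues) *
      (star h.1.eigenvectorUnitary : Matrix n n ℂ)
  else 0

noncomputable def fidelity {n : Type*} [Fintype n] [DecidableEq n] (ρ σ : Matrix n n ℂ) : ℝ :=
  traceNorm (matSqrt ρ * matSqrt σ)


/-!
Let `T` be a contraction with `Tr (Tᴴ √ρ √σ) = ‖√ρ √σ‖₁`. Inserting `1 = ∑ₓ Pₓ` between `√ρ` and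
`√σ` and applying Cauchy–Schwarz to each semi-inner product `(X, Y) ↦ Tr (Y Pₓ Xᴴ)` bounds the
fidelity by the Bhattacharyya coefficient `∑ₓ √(pₓ qₓ)` of the outcome distributions. Classically,
`(∑ₓ √(pₓ qₓ))² ≤ (∑ₓ min (pₓ, qₓ)) (∑ₓ max (pₓ, qₓ)) ≤ 2 ∑ₓ min (pₓ, qₓ) = 2 - ∑ₓ |pₓ - qₓ|`.
-/

section RCLike

variable {𝕜 n : Type*} [RCLike 𝕜] [Fintype n]

theorem Matrix.PosSemidef.trace_mul_nonneg {A B : Matrix n n 𝕜} (hA : A.PosSemidef)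
    (hB : B.PosSemidef) : 0 ≤ (A * B).trace := by
  classical
  open scoped MatrixOrder in
  obtain ⟨C, rfl⟩ := CStarAlgebra.nonneg_iff_eq_star_mul_self.mp hA.nonneg
  rw [star_eq_conjTranspose, Matrix.mul_assoc, trace_mul_comm, Matrix.mul_assoc,
    ← Matrix.mul_assoc]
  exact (hB.mul_mul_conjTranspose_same C).trace_nonneg

theorem Matrix.PosSemidef.trace_conjTranspose_mul_mul_le [DecidableEq n] {D T : Matrix n n 𝕜}
    (hD : D.PosSemidef) (hT : (1 - T * Tᴴ).PosSemidef) : (Tᴴ * D * T).trace ≤ D.trace := by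
  have h := hD.trace_mul_nonneg hT
  rw [Matrix.mul_sub, Matrix.mul_one, trace_sub, sub_nonneg] at h
  rwa [trace_mul_cycle, trace_mul_comm]

theorem Matrix.posSemidef_one_sub_mul_conjTranspose_of_mul_conjTranspose_mul_eq_self
    [DecidableEq n] {T : Matrix n n 𝕜} (hT : T * Tᴴ * T = T) : (1 - T * Tᴴ).PosSemidef := by
  open scoped MatrixOrder in
  have hproj : IsStarProjection (T * Tᴴ) :=
    ⟨by rw [IsIdempotentElem, ← Matrix.mul_assoc, hT], by
      rw [IsSelfAdjoint, star_eq_conjTranspose, conjTranspose_mul, conjTranspose_conjTranspose]⟩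
  exact hproj.one_sub.nonneg.posSemidef

theorem Matrix.PosSemidef.norm_trace_mul_mul_conjTranspose_le {M : Matrix n n 𝕜}
    (hM : M.PosSemidef) (x y : Matrix n n 𝕜) :
    ‖(y * M * xᴴ).trace‖ ≤
      √(RCLike.re (x * M * xᴴ).trace) * √(RCLike.re (y * M * yᴴ).trace) := by
  let := M.toMatrixSeminormedAddCommGroup hM
  let := M.toMatrixInnerProductSpace hM
  exact norm_inner_le_norm (𝕜 := 𝕜) x y

theorem Matrix.norm_trace_conjTranspose_mul_mul_le_of_posSemidef_one_sub [DecidableEq n]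
    {T P : Matrix n n 𝕜} (hT : (1 - T * Tᴴ).PosSemidef) (hP : P.PosSemidef) (B C : Matrix n n 𝕜) :
    ‖(Tᴴ * Bᴴ * P * C).trace‖ ≤
      √(RCLike.re (Bᴴ * P * B).trace) * √(RCLike.re (Cᴴ * P * C).trace) := by
  have hcs := hP.norm_trace_mul_mul_conjTranspose_le Cᴴ (Tᴴ * Bᴴ)
  have hcontr := (hP.conjTranspose_mul_mul_same B).trace_conjTranspose_mul_mul_le hT
  simp only [conjTranspose_conjTranspose, conjTranspose_mul, ← Matrix.mul_assoc] at hcs hcontr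
  calc _ ≤ _ := hcs
    _ ≤ √(RCLike.re (Cᴴ * P * C).trace) * √(RCLike.re (Bᴴ * P * B).trace) := by
      gcongr
    _ = _ := mul_comm _ _

end RCLike

theorem Matrix.sum_trace_mul_eq_trace {R n X : Type*} [Semiring R] [Fintype n] [DecidableEq n]
    [Fintype X] (A : Matrix n n R) {P : X → Matrix n n R} (hsum : ∑ x, P x = 1) :
    ∑ x, (A * P x).trace = A.trace := by
  rw [← trace_sum, ← Finset.mul_sum, hsum, Matrix.mul_one]

theorem sq_sum_sqrt_mul_sqrt_le_two_sub_sum_abs_sub {X : Type*} [Fintype X] {p q : X → ℝ}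
    (hp : ∀ x, 0 ≤ p x) (hq : ∀ x, 0 ≤ q x) (hp1 : ∑ x, p x = 1) (hq1 : ∑ x, q x = 1) :
    (∑ x, √(p x) * √(q x)) ^ 2 ≤ 2 - ∑ x, |p x - q x| := by
  have hmin : ∀ x, min (p x) (q x) * 2 = p x + q x - |p x - q x| := fun x => by
    linarith [min_add_max (p x) (q x), max_sub_min_eq_abs' (p x) (q x)]
  calc (∑ x, √(p x) * √(q x)) ^ 2 ≤ (∑ x, min (p x) (q x)) * ∑ x, max (p x) (q x) :=
        Finset.sum_sq_le_sum_mul_sum_of_sq_le_mul _ (fun x _ => le_min (hp x) (hq x))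
          (fun x _ => (hp x).trans (le_max_left _ _))
          (fun x _ => by rw [mul_pow, sq_sqrt (hp x), sq_sqrt (hq x), min_mul_max])
    _ ≤ (∑ x, min (p x) (q x)) * ∑ x, (p x + q x) := by
        gcongr with x
        · exact Finset.sum_nonneg fun x _ => le_min (hp x) (hq x)
        · exact max_le_add_of_nonneg (hp x) (hq x)
    _ = 2 - ∑ x, |p x - q x| := by
        rw [Finset.sum_add_distrib, hp1, hq1, one_add_one_eq_two, Finset.sum_mul,
          Finset.sum_congr rfl fun x _ => hmin x, Finset.sum_sub_distrib, Finset.sum_add_distrib,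
          hp1, hq1]
        ring

section Quantum

variable {n : Type*} [Fintype n] [DecidableEq n]

theorem matSqrt_posSemidef {A : Matrix n n ℂ} (hA : A.PosSemidef) : (matSqrt A).PosSemidef := by
  rw [matSqrt, dif_pos hA]
  refine (PosSemidef.diagonal fun i => ?_).mul_mul_conjTranspose_same _
  exact Complex.zero_le_real.mpr (Real.sqrt_nonneg _)

theorem matSqrt_mul_self {A : Matrix n n ℂ} (hA : A.PosSemidef) : matSqrt A * matSqrt A = A := by
  rw [matSqrt, dif_pos hA]
  set U := (hA.1.eigenvectorUnitary : Matrix n n ℂ)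
  have hUU : star U * U = 1 := Matrix.mem_unitaryGroup_iff'.mp hA.1.eigenvectorUnitary.2
  have hD : diagonal (((↑) ∘ (√·) ∘ hA.1.eigenvalues) : n → ℂ) *
      diagonal (((↑) ∘ (√·) ∘ hA.1.eigenvalues) : n → ℂ) =
      diagonal (RCLike.ofReal ∘ hA.1.eigenvalues) := by
    rw [diagonal_mul_diagonal]
    congr 1
    funext i
    simp only [Function.comp]
    rw [← Complex.ofReal_mul, Real.mul_self_sqrt (hA.eigenvalues_nonneg i)]
    rfl
  conv_rhs => rw [hA.1.spectral_theorem, Unitary.conjStarAlgAut_apply]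
  rw [← hD]
  simp only [Matrix.mul_assoc]
  rw [← Matrix.mul_assoc (star U) U, hUU, Matrix.one_mul]

theorem trace_conjTranspose_matSqrt_mul_mul_matSqrt {A : Matrix n n ℂ} (hA : A.PosSemidef)
    (P : Matrix n n ℂ) : ((matSqrt A)ᴴ * P * matSqrt A).trace = (A * P).trace := by
  rw [(matSqrt_posSemidef hA).isHermitian.eq, trace_mul_cycle, matSqrt_mul_self hA]

theorem traceNorm_nonneg (A : Matrix n n ℂ) : 0 ≤ traceNorm A :=
  Finset.sum_nonneg fun _ _ => Real.sqrt_nonneg _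

theorem fidelity_nonneg (ρ σ : Matrix n n ℂ) : 0 ≤ fidelity ρ σ :=
  traceNorm_nonneg _

/-- The witness is `T = A |A|⁺`, the partial isometry of the polar decomposition of `A`. -/
theorem exists_trace_conjTranspose_mul_eq_traceNorm (A : Matrix n n ℂ) :
    ∃ T : Matrix n n ℂ, (Tᴴ * A).trace = traceNorm A ∧ (1 - T * Tᴴ).PosSemidef := by
  have hH := (posSemidef_conjTranspose_mul_self A).isHermitian
  set μ := hH.eigenvalues
  have hμ : ∀ i, 0 ≤ μ i := (posSemidef_conjTranspose_mul_self A).eigenvalues_nonneg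
  set U : Matrix n n ℂ := (hH.eigenvectorUnitary : Matrix n n ℂ)
  have hUU : Uᴴ * U = 1 := Matrix.mem_unitaryGroup_iff'.mp hH.eigenvectorUnitary.2
  have hdiag : Uᴴ * (Aᴴ * A) * U = diagonal (fun i => (μ i : ℂ)) := by
    have h := hH.conjStarAlgAut_star_eigenvectorUnitary
    rw [Unitary.conjStarAlgAut_star_apply] at h
    exact h
  set F : Matrix n n ℂ := diagonal (fun i => (((√(μ i))⁻¹ : ℝ) : ℂ))
  have hF : Fᴴ = F := by simp [F]
  refine ⟨A * U * F * Uᴴ, ?_,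
    posSemidef_one_sub_mul_conjTranspose_of_mul_conjTranspose_mul_eq_self ?_⟩
  · rw [conjTranspose_mul, conjTranspose_mul, conjTranspose_mul, conjTranspose_conjTranspose, hF,
      Matrix.mul_assoc, trace_mul_comm,
      show F * (Uᴴ * Aᴴ) * A * U = F * (Uᴴ * (Aᴴ * A) * U) by simp only [Matrix.mul_assoc],
      hdiag, diagonal_mul_diagonal, trace_diagonal, traceNorm, ofReal_sum]
    refine Finset.sum_congr rfl fun i _ => ?_
    exact_mod_cast (inv_mul_eq_div _ _).trans Real.div_sqrt
  · have hFFD : F * F * diagonal (fun i => (μ i : ℂ)) * F = F := by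
      simp only [F, diagonal_mul_diagonal]
      congr 1
      funext i
      have h : (√(μ i))⁻¹ * ((√(μ i))⁻¹ * μ i) * (√(μ i))⁻¹ = (√(μ i))⁻¹ := by
        rw [inv_mul_eq_div (√(μ i)) (μ i), Real.div_sqrt]
        simpa using mul_inv_mul_cancel (√(μ i))⁻¹
      rw [← _root_.mul_assoc] at h
      exact_mod_cast h
    calc A * U * F * Uᴴ * (A * U * F * Uᴴ)ᴴ * (A * U * F * Uᴴ)
        = A * U * (F * (Uᴴ * U) * F * (Uᴴ * (Aᴴ * A) * U) * F) * Uᴴ := by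
          simp only [conjTranspose_mul, conjTranspose_conjTranspose, hF, Matrix.mul_assoc]
      _ = A * U * F * Uᴴ := by rw [hUU, hdiag, Matrix.mul_one, hFFD]

theorem fidelity_le_sum_sqrt_mul_sqrt {X : Type*} [Fintype X] {ρ σ : Matrix n n ℂ}
    (hρ : ρ.PosSemidef) (hσ : σ.PosSemidef) {P : X → Matrix n n ℂ}
    (hP : ∀ x, (P x).PosSemidef) (hsum : ∑ x, P x = 1) :
    fidelity ρ σ ≤ ∑ x, √((ρ * P x).trace.re) * √((σ * P x).trace.re) := by
  obtain ⟨T, hTA, hT⟩ := exists_trace_conjTranspose_mul_eq_traceNorm (matSqrt ρ * matSqrt σ)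
  have hsplit : Tᴴ * (matSqrt ρ * matSqrt σ) =
      ∑ x, Tᴴ * (matSqrt ρ)ᴴ * P x * matSqrt σ := by
    rw [(matSqrt_posSemidef hρ).isHermitian.eq, ← Finset.sum_mul, ← Finset.mul_sum, hsum,
      Matrix.mul_one, Matrix.mul_assoc]
  calc fidelity ρ σ = ‖(Tᴴ * (matSqrt ρ * matSqrt σ)).trace‖ := by
        rw [hTA, norm_real, Real.norm_of_nonneg (traceNorm_nonneg _)]
        rfl
    _ ≤ ∑ x, ‖(Tᴴ * (matSqrt ρ)ᴴ * P x * matSqrt σ).trace‖ := by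
        rw [hsplit, trace_sum]
        exact norm_sum_le _ _
    _ ≤ _ := Finset.sum_le_sum fun x _ => by
        have h := norm_trace_conjTranspose_mul_mul_le_of_posSemidef_one_sub hT (hP x)
          (matSqrt ρ) (matSqrt σ)
        rwa [trace_conjTranspose_matSqrt_mul_mul_matSqrt hρ,
          trace_conjTranspose_matSqrt_mul_mul_matSqrt hσ] at h

end Quantum

theorem kolmogorov_le_one_sub_half_fidelity_sq {n : Type*} [Fintype n] [DecidableEq n]
    {X : Type*} [Fintype X]
    (ρ σ : Matrix n n ℂ) (hρ : IsDensity ρ) (hσ : IsDensity σ)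
    (P : X → Matrix n n ℂ) (hP : ∀ x, (P x).PosSemidef) (hsum : ∑ x, P x = 1) :
    (1/2) * ∑ x, |((ρ * P x).trace).re - ((σ * P x).trace).re|
      ≤ 1 - fidelity ρ σ ^ 2 / 2 := by
  have hprob : ∀ {τ : Matrix n n ℂ}, IsDensity τ →
      (∀ x, 0 ≤ ((τ * P x).trace).re) ∧ ∑ x, ((τ * P x).trace).re = 1 := fun hτ =>
    ⟨fun x => by simpa using Complex.re_le_re (hτ.1.trace_mul_nonneg (hP x)),
      by rw [← re_sum, sum_trace_mul_eq_trace _ hsum, hτ.2, one_re]⟩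
  have hBC := sq_sum_sqrt_mul_sqrt_le_two_sub_sum_abs_sub (hprob hρ).1 (hprob hσ).1
    (hprob hρ).2 (hprob hσ).2
  have hF := pow_le_pow_left₀ (fidelity_nonneg ρ σ)
    (fidelity_le_sum_sqrt_mul_sqrt hρ.1 hσ.1 hP hsum) 2
  linarith
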